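/- Let X be a real Hilbert space and A, B nonempty closed convex subsets of X. Suppose there exist x₀ ∈ A ∩ B and f ∈ X* \ {0} such that inf f(B) = f(x₀) = sup f(A) and f strongly exposes A at x₀. Then for every starting point c₀ ∈ X, the (unperturbed) alternating projections sequences defined by d_n = P_B(c_{n−1}) and c_n = P_A(d_n) converge in norm to x₀. -/

import Mathlib

open Filter Metric Topology

/-- `p` is a metric projection (nearest point) of `x` onto `K`. -/
def IsProjOn {X : Type*} [NormedAddCommGroup X] (K : Set X) (x p : X) : Prop :=
  p ∈ K ∧ ∀ y ∈ K, dist x p ≤ dist x y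

/-- `f` strongly exposes `A` at `a`. -/
def StronglyExposes {X : Type*} [NormedAddCommGroup X] [NormedSpace ℝ X]
    (f : X →L[ℝ] ℝ) (A : Set X) (a : X) : Prop :=
  a ∈ A ∧ (∀ x ∈ A, f x ≤ f a) ∧
    ∀ x : ℕ → X, (∀ n, x n ∈ A) → Tendsto (fun n => f (x n)) atTop (nhds (f a)) →
      Tendsto x atTop (nhds a)

/-!
Any point `z ∈ A ∩ B` is fixed by both projections, so by the Pythagorean inequality for projections
onto convex sets, `‖c n - z‖²` decreases by at least `‖d (n+1) - c (n+1)‖²` at each step; hence the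
gap `d (n+1) - c (n+1)` tends to `0`. Since `f` separates `A` and `B` at `x₀`, this forces
`f (c n) → f x₀`, and strong exposedness turns this into `c n → x₀`, hence also `d n → x₀`.
-/

lemma IsProjOn.inner_sub_nonpos {X : Type*} [NormedAddCommGroup X] [InnerProductSpace ℝ X]
    {K : Set X} (hK : Convex ℝ K) {x p : X} (h : IsProjOn K x p) {y : X} (hy : y ∈ K) :
    inner ℝ (x - p) (y - p) ≤ 0 := by
  have : Nonempty K := ⟨⟨p, h.1⟩⟩
  refine (norm_eq_iInf_iff_real_inner_le_zero hK h.1).mp (le_antisymm ?_ ?_) y hy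
  · exact le_ciInf fun w => by simpa only [dist_eq_norm] using h.2 w w.2
  · exact ciInf_le ⟨0, by rintro r ⟨w, rfl⟩; exact norm_nonneg _⟩ (⟨p, h.1⟩ : K)

lemma IsProjOn.norm_sub_sq_add_norm_sub_sq_le {X : Type*} [NormedAddCommGroup X]
    [InnerProductSpace ℝ X] {K : Set X} (hK : Convex ℝ K) {x p z : X} (h : IsProjOn K x p)
    (hz : z ∈ K) :
    ‖x - p‖ ^ 2 + ‖p - z‖ ^ 2 ≤ ‖x - z‖ ^ 2 := by
  have hexpand : ‖x - z‖ ^ 2 = ‖x - p‖ ^ 2 - 2 * inner ℝ (x - p) (z - p) + ‖p - z‖ ^ 2 := by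
    rw [show x - z = (x - p) - (z - p) by abel, norm_sub_sq_real, norm_sub_rev z p]
  linarith [h.inner_sub_nonpos hK hz]

lemma tendsto_zero_of_le_sub_succ {a u : ℕ → ℝ} (hu : ∀ n, 0 ≤ u n) (ha : ∀ n, 0 ≤ a n)
    (h : ∀ n, a n ≤ u n - u (n + 1)) : Tendsto a atTop (𝓝 0) := by
  have hanti : Antitone u := antitone_nat_of_succ_le fun n => by linarith [h n, ha n]
  have hlim : Tendsto u atTop (𝓝 (⨅ n, u n)) :=
    tendsto_atTop_ciInf hanti ⟨0, by rintro r ⟨n, rfl⟩; exact hu n⟩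
  have hdiff : Tendsto (fun n => u n - u (n + 1)) atTop (𝓝 0) := by
    simpa using hlim.sub (hlim.comp (tendsto_add_atTop_nat 1))
  exact tendsto_of_tendsto_of_tendsto_of_le_of_le tendsto_const_nhds hdiff ha h

section AlternatingProjections

variable {X : Type*} [NormedAddCommGroup X] [InnerProductSpace ℝ X] {A B : Set X}
  {c d : ℕ → X}

lemma norm_sub_sq_le_of_alternatingProj (hAv : Convex ℝ A) (hBv : Convex ℝ B)
    (hcd : ∀ n, IsProjOn B (c n) (d (n + 1)) ∧ IsProjOn A (d (n + 1)) (c (n + 1)))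
    {z : X} (hz : z ∈ A ∩ B) (n : ℕ) :
    ‖d (n + 1) - c (n + 1)‖ ^ 2 ≤ ‖c n - z‖ ^ 2 - ‖c (n + 1) - z‖ ^ 2 := by
  have hA := (hcd n).2.norm_sub_sq_add_norm_sub_sq_le hAv hz.1
  have hB := (hcd n).1.norm_sub_sq_add_norm_sub_sq_le hBv hz.2
  nlinarith [sq_nonneg ‖c n - d (n + 1)‖]

lemma tendsto_sub_zero_of_alternatingProj (hAv : Convex ℝ A) (hBv : Convex ℝ B)
    (hcd : ∀ n, IsProjOn B (c n) (d (n + 1)) ∧ IsProjOn A (d (n + 1)) (c (n + 1)))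
    {z : X} (hz : z ∈ A ∩ B) :
    Tendsto (fun n => d (n + 1) - c (n + 1)) atTop (𝓝 0) := by
  have hsq : Tendsto (fun n => ‖d (n + 1) - c (n + 1)‖ ^ 2) atTop (𝓝 0) :=
    tendsto_zero_of_le_sub_succ (u := fun n => ‖c n - z‖ ^ 2) (fun _ => sq_nonneg _)
      (fun _ => sq_nonneg _) (norm_sub_sq_le_of_alternatingProj hAv hBv hcd hz)
  refine tendsto_zero_iff_norm_tendsto_zero.mpr ?_
  simpa [Real.sqrt_sq (norm_nonneg _)] using hsq.sqrt

end AlternatingProjections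

lemma StronglyExposes.tendsto_of_tendsto_sub_zero {X : Type*} [NormedAddCommGroup X]
    [NormedSpace ℝ X] {f : X →L[ℝ] ℝ} {A B : Set X} {x₀ : X} (hexp : StronglyExposes f A x₀)
    (hB : ∀ x ∈ B, f x₀ ≤ f x) {a b : ℕ → X} (ha : ∀ n, a n ∈ A) (hb : ∀ n, b n ∈ B)
    (hab : Tendsto (fun n => b n - a n) atTop (𝓝 0)) :
    Tendsto a atTop (𝓝 x₀) := by
  have hlow : Tendsto (fun n => f x₀ - f (b n - a n)) atTop (𝓝 (f x₀)) := by
    have hfgap : Tendsto (fun n => f (b n - a n)) atTop (𝓝 0) := by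
      simpa only [Function.comp_def, map_zero] using (f.continuous.tendsto 0).comp hab
    simpa using (tendsto_const_nhds (x := f x₀)).sub hfgap
  refine hexp.2.2 a ha (tendsto_of_tendsto_of_tendsto_of_le_of_le hlow tendsto_const_nhds
    (fun n => ?_) (fun n => hexp.2.1 _ (ha n)))
  simp only [map_sub]
  linarith [hB _ (hb n)]

theorem stmt19_general {X : Type*} [NormedAddCommGroup X] [InnerProductSpace ℝ X]
    (A B : Set X) (hAv : Convex ℝ A)
    (hBv : Convex ℝ B)
    (x₀ : X) (hx₀ : x₀ ∈ A ∩ B)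
    (f : X →L[ℝ] ℝ)
    (hinf : ∀ x ∈ B, f x₀ ≤ f x)
    (hexp : StronglyExposes f A x₀)
    (c d : ℕ → X)
    (hcd : ∀ n : ℕ, IsProjOn B (c n) (d (n + 1)) ∧ IsProjOn A (d (n + 1)) (c (n + 1))) :
    Tendsto c atTop (nhds x₀) ∧ Tendsto d atTop (nhds x₀) := by
  have hgap := tendsto_sub_zero_of_alternatingProj hAv hBv hcd hx₀
  have hc : Tendsto (fun n => c (n + 1)) atTop (𝓝 x₀) :=
    hexp.tendsto_of_tendsto_sub_zero hinf (fun n => (hcd n).2.1) (fun n => (hcd n).1.1) hgap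
  have hd : Tendsto (fun n => d (n + 1)) atTop (𝓝 x₀) := by
    simpa using hgap.add hc
  exact ⟨(tendsto_add_atTop_iff_nat 1).mp hc, (tendsto_add_atTop_iff_nat 1).mp hd⟩

theorem stmt19 {X : Type*} [NormedAddCommGroup X] [InnerProductSpace ℝ X] [CompleteSpace X]
    (A B : Set X) (hAne : A.Nonempty) (hAc : IsClosed A) (hAv : Convex ℝ A)
    (hBne : B.Nonempty) (hBc : IsClosed B) (hBv : Convex ℝ B)
    (x₀ : X) (hx₀ : x₀ ∈ A ∩ B)
    (f : X →L[ℝ] ℝ) (hf : f ≠ 0)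
    (hinf : ∀ x ∈ B, f x₀ ≤ f x) (hsup : ∀ x ∈ A, f x ≤ f x₀)
    (hexp : StronglyExposes f A x₀)
    (c₀ : X) (c d : ℕ → X) (hc0 : c 0 = c₀)
    (hcd : ∀ n : ℕ, IsProjOn B (c n) (d (n + 1)) ∧ IsProjOn A (d (n + 1)) (c (n + 1))) :
    Tendsto c atTop (nhds x₀) ∧ Tendsto d atTop (nhds x₀) :=
  stmt19_general A B hAv hBv x₀ hx₀ f hinf hexp c d hcd
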